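/- arXiv:1508.07086 — 3 statements merged into one kernel-verified Lean document; each statement's English description precedes it below -/
import Mathlib

section
/- Let A be a C*-algebra and let s, t ∈ A be partial isometries such that s*s = t*t (they have the same source projection) and such that st* commutes with both ss* and tt*. Then ss* = tt*, i.e., st* is a normal partial isometry. -/
/-- If `s, t` are partial isometries in a C*-algebra with the same source projection
`s* s = t* t`, and `s t*` commutes with both range projections `s s*` and `t t*`,
then `s s* = t t*` (so `s t*` is a normal partial isometry). -/
theorem range_proj_eq_of_commutes {A : Type*} [NonUnitalCStarAlgebra A] (s t : A)
    (hs : s * star s * s = s) (ht : t * star t * t = t)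
    (hsrc : star s * s = star t * t)
    (h₁ : s * star t * (s * star s) = s * star s * (s * star t))
    (h₂ : s * star t * (t * star t) = t * star t * (s * star t)) :
    s * star s = t * star t := by
  -- `p u = u` where `u = s t*`, `p = s s*`
  have hpu : s * star s * (s * star t) = s * star t := by
    have e : s * star s * (s * star t) = (s * star s * s) * star t := by noncomm_ring
    rw [e, hs]
  -- `u p = u`
  have hup : s * star t * (s * star s) = s * star t := h₁.trans hpu
  -- `u q = u` where `q = t t*`
  have huq : s * star t * (t * star t) = s * star t := by
    have e : s * star t * (t * star t) = s * (star t * t) * star t := by noncomm_ring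
    rw [e, ← hsrc]
    have e2 : s * (star s * s) * star t = (s * star s * s) * star t := by noncomm_ring
    rw [e2, hs]
  -- `q u = u`
  have hqu : t * star t * (s * star t) = s * star t := h₂.symm.trans huq
  -- `u u* = p`
  have huu : (s * star t) * (t * star s) = s * star s := by
    have e : (s * star t) * (t * star s) = s * (star t * t) * star s := by noncomm_ring
    rw [e, ← hsrc]
    have e2 : s * (star s * s) * star s = (s * star s * s) * star s := by noncomm_ring
    rw [e2, hs]
  -- `u* u = q`
  have huu' : (t * star s) * (s * star t) = t * star t := by
    have e : (t * star s) * (s * star t) = t * (star s * s) * star t := by noncomm_ring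
    rw [e, hsrc]
    have e2 : t * (star t * t) * star t = (t * star t * t) * star t := by noncomm_ring
    rw [e2, ht]
  -- `q p = q` : multiply `u p = u` on the left by `u* = t s*`
  have h3 : t * star t * (s * star s) = t * star t := by
    calc t * star t * (s * star s)
        = (t * star s) * (s * star t * (s * star s)) := by rw [← huu']; noncomm_ring
      _ = (t * star s) * (s * star t) := by rw [hup]
      _ = t * star t := huu'
  -- `q p = p` : multiply `q u = u` on the right by `u* = t s*`
  have h4 : t * star t * (s * star s) = s * star s := by
    calc t * star t * (s * star s)
        = (t * star t * (s * star t)) * (t * star s) := by rw [← huu]; noncomm_ring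
      _ = (s * star t) * (t * star s) := by rw [hqu]
      _ = s * star s := huu
  exact h4.symm.trans h3
end

section
/- In the C*-algebra C*(Λ) of a row-finite source-free k-graph Λ, for μ, ν ∈ Λ with s(μ) = s(ν), the generator s_μ s_ν* lies in the relative commutant D_Λ' of the diagonal algebra if and only if μ ∼ ν, where μ ∼ ν means s(μ) = s(ν) and μx = νx for all infinite paths x ∈ s(μ)Λ^∞. -/
open scoped BigOperators

/-- A row-finite, source-free `k`-graph: a countable small category together with a degree
functor `d : Λ → ℕ^k` satisfying the unique factorization property. -/
structure KGraph (k : ℕ) where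
  Obj : Type
  Mor : Type
  countable_mor : Countable Mor
  src : Mor → Obj
  rng : Mor → Obj
  idm : Obj → Mor
  comp : (μ ν : Mor) → src μ = rng ν → Mor
  src_idm : ∀ v, src (idm v) = v
  rng_idm : ∀ v, rng (idm v) = v
  comp_idm_left : ∀ μ (h : src (idm (rng μ)) = rng μ), comp (idm (rng μ)) μ h = μ
  comp_idm_right : ∀ μ (h : src μ = rng (idm (src μ))), comp μ (idm (src μ)) h = μ
  src_comp : ∀ μ ν h, src (comp μ ν h) = src ν
  rng_comp : ∀ μ ν h, rng (comp μ ν h) = rng μ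
  comp_assoc : ∀ μ ν ξ (h1 : src μ = rng ν) (h2 : src ν = rng ξ)
    (h3 : src (comp μ ν h1) = rng ξ) (h4 : src μ = rng (comp ν ξ h2)),
    comp (comp μ ν h1) ξ h3 = comp μ (comp ν ξ h2) h4
  d : Mor → Fin k → ℕ
  d_idm : ∀ v, d (idm v) = 0
  d_comp : ∀ μ ν h, d (comp μ ν h) = d μ + d ν
  factor : ∀ (ξ : Mor) (m n : Fin k → ℕ), d ξ = m + n →
    ∃! p : Mor × Mor, ∃ h : src p.1 = rng p.2, d p.1 = m ∧ d p.2 = n ∧ comp p.1 p.2 h = ξ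
  rowFinite : ∀ (v : Obj) (n : Fin k → ℕ), {μ : Mor | rng μ = v ∧ d μ = n}.Finite
  sourceFree : ∀ (v : Obj) (n : Fin k → ℕ), ∃ μ : Mor, rng μ = v ∧ d μ = n

namespace KGraph

variable {k : ℕ} {Λ : KGraph k}

/-- An infinite path in a `k`-graph: a degree-preserving functor from `Ω_k` to `Λ`,
recorded by its segments `x(m, n)` for `m ≤ n` in `ℕ^k`. -/
structure InfPath (Λ : KGraph k) where
  seg : (m n : Fin k → ℕ) → m ≤ n → Λ.Mor
  d_seg : ∀ m n h, Λ.d (seg m n h) = fun i => n i - m i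
  src_rng : ∀ m n p (h1 : m ≤ n) (h2 : n ≤ p),
    Λ.src (seg m n h1) = Λ.rng (seg n p h2)
  comp_seg : ∀ m n p (h1 : m ≤ n) (h2 : n ≤ p)
    (h3 : Λ.src (seg m n h1) = Λ.rng (seg n p h2)),
    Λ.comp (seg m n h1) (seg n p h2) h3 = seg m p (h1.trans h2)

/-- The range vertex `x(0) = r(x)` of an infinite path. -/
def InfPath.head (x : Λ.InfPath) : Λ.Obj := Λ.src (x.seg 0 0 le_rfl)

lemma InfPath.head_eq_rng (x : Λ.InfPath) (p : Fin k → ℕ) (h : 0 ≤ p) :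
    Λ.rng (x.seg 0 p h) = x.head := (x.src_rng 0 0 p le_rfl h).symm

/-- The shift `σ^p(x)` of an infinite path. -/
def InfPath.shift (x : Λ.InfPath) (p : Fin k → ℕ) : Λ.InfPath where
  seg m n h := x.seg (m + p) (n + p) (fun i => Nat.add_le_add_right (h i) _)
  d_seg m n h := by
    rw [x.d_seg]; funext i; simp [Nat.add_sub_add_right]
  src_rng m n q h1 h2 := x.src_rng _ _ _ _ _
  comp_seg m n q h1 h2 h3 := x.comp_seg _ _ _ _ _ _

/-- `μ ∼ ν` : `s(μ) = s(ν)` and `μ x = ν x` for every infinite path `x ∈ s(μ)Λ^∞`;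
equality of the infinite paths `μ x` and `ν x` is recorded as equality of all their
initial segments. -/
def sim (Λ : KGraph k) (μ ν : Λ.Mor) : Prop :=
  ∃ hsrc : Λ.src μ = Λ.src ν,
    ∀ (x : Λ.InfPath) (hx : x.head = Λ.src μ) (n : Fin k → ℕ),
      Λ.d μ ≤ n → Λ.d ν ≤ n →
      Λ.comp μ (x.seg 0 (fun i => n i - Λ.d μ i) (fun _ => Nat.zero_le _))
        (hx.symm.trans (x.head_eq_rng _ _).symm)
      = Λ.comp ν (x.seg 0 (fun i => n i - Λ.d ν i) (fun _ => Nat.zero_le _))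
        ((hsrc.symm.trans hx.symm).trans (x.head_eq_rng _ _).symm)

/-- An infinite path is (eventually) periodic if `σ^m x = σ^n x` for some `m ≠ n`. -/
def InfPath.eventuallyPeriodic (x : Λ.InfPath) : Prop :=
  ∃ m n : Fin k → ℕ, m ≠ n ∧ x.shift m = x.shift n

/-- A `k`-graph is aperiodic if every vertex receives a non-periodic infinite path. -/
def aperiodic (Λ : KGraph k) : Prop :=
  ∀ v : Λ.Obj, ∃ x : Λ.InfPath, x.head = v ∧ ¬ x.eventuallyPeriodic

end KGraph
section CStar

open scoped BigOperators

variable {k : ℕ}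

/-- A Cuntz–Krieger `Λ`-family in a C*-algebra `A`. -/
structure CKFamily (Λ : KGraph k) (A : Type*) [NonUnitalCStarAlgebra A] where
  S : Λ.Mor → A
  S_star_idm : ∀ v, star (S (Λ.idm v)) = S (Λ.idm v)
  S_idem : ∀ v, S (Λ.idm v) * S (Λ.idm v) = S (Λ.idm v)
  S_orth : ∀ v w, v ≠ w → S (Λ.idm v) * S (Λ.idm w) = 0
  S_mul : ∀ μ ν (h : Λ.src μ = Λ.rng ν), S μ * S ν = S (Λ.comp μ ν h)
  S_ck3 : ∀ μ, star (S μ) * S μ = S (Λ.idm (Λ.src μ))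
  S_ck3' : ∀ μ ν, Λ.d μ = Λ.d ν → μ ≠ ν → star (S μ) * S ν = 0
  S_ck4 : ∀ v n, S (Λ.idm v) = ∑ μ ∈ (Λ.rowFinite v n).toFinset, S μ * star (S μ)

namespace CKFamily

variable {Λ : KGraph k} {A : Type*} [NonUnitalCStarAlgebra A]

/-- The C*-subalgebra (as a subset) generated by a subset `T` of `A`. -/
def gen (T : Set A) : Set A :=
  closure (NonUnitalStarAlgebra.adjoin ℂ T : Set A)

/-- The diagonal subalgebra `D_Λ`, generated by the range projections `s_μ s_μ*`. -/
def diag (f : CKFamily Λ A) : Set A :=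
  gen {a | ∃ μ : Λ.Mor, a = f.S μ * star (f.S μ)}

/-- The cycline subalgebra `M_Λ = C*(s_μ s_ν* : μ ∼ ν)`. -/
def cycline (f : CKFamily Λ A) : Set A :=
  gen {a | ∃ μ ν : Λ.Mor, Λ.sim μ ν ∧ a = f.S μ * star (f.S ν)}

/-- The relative commutant of a subset `B` of `A`. -/
def commutant (B : Set A) : Set A := {a : A | ∀ b ∈ B, a * b = b * a}

/-- A subset `B` is a maximal abelian subalgebra of `A`. -/
def IsMasa (B : Set A) : Prop :=
  (∀ x ∈ B, ∀ y ∈ B, x * y = y * x) ∧ ∀ a : A, (∀ x ∈ B, a * x = x * a) → a ∈ B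

/-- The condition that a family of star-algebra automorphisms `γ` is a gauge action
for the Cuntz–Krieger family `f`, i.e. `γ_t(s_μ) = t^{d(μ)} s_μ`. -/
def IsGaugeAction (f : CKFamily Λ A) (γ : (Fin k → Circle) → A ≃⋆ₐ[ℂ] A) : Prop :=
  ∀ (t : Fin k → Circle) (μ : Λ.Mor),
    γ t (f.S μ) = (∏ i, (t i : ℂ) ^ Λ.d μ i) • f.S μ

end CKFamily

end CStar

namespace KGraph

variable {k : ℕ} {Λ : KGraph k}

/-- Congruence for `comp` in both arguments (proofs are irrelevant). -/
lemma comp_congr {u u' w w' : Λ.Mor} (hu : u = u') (hw : w = w')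
    (h : Λ.src u = Λ.rng w) (h' : Λ.src u' = Λ.rng w') :
    Λ.comp u w h = Λ.comp u' w' h' := by
  subst hu; subst hw; rfl

lemma fac_exists (ξ : Λ.Mor) (m n : Fin k → ℕ) (h : Λ.d ξ = m + n) :
    ∃ u w, ∃ hc : Λ.src u = Λ.rng w, Λ.d u = m ∧ Λ.d w = n ∧ Λ.comp u w hc = ξ := by
  obtain ⟨p, ⟨hc, h1, h2, h3⟩, -⟩ := Λ.factor ξ m n h
  exact ⟨p.1, p.2, hc, h1, h2, h3⟩

/-- Uniqueness of factorizations: two factorizations of the same morphism with the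
same degree on the first factor agree. -/
lemma prefix_unique {u w u' w' : Λ.Mor} {hc : Λ.src u = Λ.rng w} {hc' : Λ.src u' = Λ.rng w'}
    (hd : Λ.d u = Λ.d u') (he : Λ.comp u w hc = Λ.comp u' w' hc') : u = u' ∧ w = w' := by
  obtain ⟨p, -, hup⟩ := Λ.factor (Λ.comp u w hc) (Λ.d u) (Λ.d w) (Λ.d_comp u w hc)
  have hdw : Λ.d w' = Λ.d w := by
    have h2 := congrArg Λ.d he
    rw [Λ.d_comp, Λ.d_comp, hd] at h2
    funext i
    have h3 := congrFun h2 i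
    simp only [Pi.add_apply] at h3
    omega
  have e1 : (u, w) = p := hup (u, w) ⟨hc, rfl, rfl, rfl⟩
  have e2 : (u', w') = p := hup (u', w') ⟨hc', hd.symm, hdw, he.symm⟩
  have e3 := e1.trans e2.symm
  exact ⟨congrArg Prod.fst e3, congrArg Prod.snd e3⟩

/-- Extend a two-step composition to a single composition with the first factor. -/
lemma comp_extend {u w z ρ t : Λ.Mor} {hc : Λ.src u = Λ.rng w} {hc2 : Λ.src z = Λ.rng ρ}
    (he : Λ.comp u w hc = z) (he2 : Λ.comp z ρ hc2 = t) :
    ∃ τ, ∃ hcτ : Λ.src u = Λ.rng τ, Λ.comp u τ hcτ = t ∧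
      ∃ hcw : Λ.src w = Λ.rng ρ, τ = Λ.comp w ρ hcw := by
  have hcw : Λ.src w = Λ.rng ρ := by
    rw [← Λ.src_comp u w hc, he]; exact hc2
  have h3 : Λ.src (Λ.comp u w hc) = Λ.rng ρ := by rw [Λ.src_comp]; exact hcw
  have h4 : Λ.src u = Λ.rng (Λ.comp w ρ hcw) := by rw [Λ.rng_comp]; exact hc
  have hA := Λ.comp_assoc u w ρ hc hcw h3 h4
  have hB : Λ.comp (Λ.comp u w hc) ρ h3 = t := (comp_congr he rfl h3 hc2).trans he2
  exact ⟨Λ.comp w ρ hcw, h4, hA.symm.trans hB, hcw, rfl⟩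

end KGraph
namespace KGraph

variable {k : ℕ} {Λ : KGraph k}

noncomputable def extVert (Λ : KGraph k) (v : Λ.Obj) : Λ.Mor :=
  (Λ.sourceFree v (fun _ => 1)).choose

lemma rng_extVert (Λ : KGraph k) (v : Λ.Obj) : Λ.rng (Λ.extVert v) = v :=
  (Λ.sourceFree v (fun _ => 1)).choose_spec.1

lemma d_extVert (Λ : KGraph k) (v : Λ.Obj) : Λ.d (Λ.extVert v) = fun _ => 1 :=
  (Λ.sourceFree v (fun _ => 1)).choose_spec.2

noncomputable def chain (Λ : KGraph k) (ζ : Λ.Mor) : ℕ → Λ.Mor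
  | 0 => ζ
  | j + 1 => Λ.comp (Λ.chain ζ j) (Λ.extVert (Λ.src (Λ.chain ζ j)))
      (Λ.rng_extVert _).symm

lemma d_chain (Λ : KGraph k) (ζ : Λ.Mor) (j : ℕ) :
    Λ.d (Λ.chain ζ j) = fun i => Λ.d ζ i + j := by
  induction j with
  | zero => funext i; simp [chain]
  | succ j ih =>
    funext i
    show Λ.d (Λ.comp (Λ.chain ζ j) _ _) i = _
    rw [Λ.d_comp]
    simp only [Pi.add_apply, ih, Λ.d_extVert]
    omega

lemma chain_prefix (Λ : KGraph k) (ζ : Λ.Mor) {j j' : ℕ} (h : j ≤ j') :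
    ∃ ρ, ∃ hc : Λ.src (Λ.chain ζ j) = Λ.rng ρ, Λ.comp (Λ.chain ζ j) ρ hc = Λ.chain ζ j' := by
  induction j' with
  | zero =>
    have hj : j = 0 := Nat.le_zero.mp h
    subst hj
    exact ⟨Λ.idm (Λ.src (Λ.chain ζ 0)), (Λ.rng_idm _).symm, Λ.comp_idm_right _ _⟩
  | succ j' ih =>
    rcases Nat.lt_or_ge j (j' + 1) with hl | hg
    · obtain ⟨ρ, hc, he⟩ := ih (Nat.lt_succ_iff.mp hl)
      have he2 : Λ.comp (Λ.chain ζ j') (Λ.extVert (Λ.src (Λ.chain ζ j')))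
          (Λ.rng_extVert _).symm = Λ.chain ζ (j' + 1) := rfl
      obtain ⟨τ, hcτ, heτ, -⟩ := comp_extend he he2
      exact ⟨τ, hcτ, heτ⟩
    · have hj : j = j' + 1 := le_antisymm h hg
      subst hj
      exact ⟨Λ.idm (Λ.src (Λ.chain ζ (j' + 1))), (Λ.rng_idm _).symm, Λ.comp_idm_right _ _⟩

/-- The level used to define the prefix of degree `n`. -/
def Jc (n : Fin k → ℕ) : ℕ := ∑ i, n i

lemma le_Jc (n : Fin k → ℕ) (i : Fin k) : n i ≤ Jc n :=
  Finset.single_le_sum (fun j _ => Nat.zero_le _) (Finset.mem_univ i)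

lemma pre_aux (Λ : KGraph k) (ζ : Λ.Mor) (n : Fin k → ℕ) :
    Λ.d (Λ.chain ζ (Jc n)) = n + fun i => Λ.d ζ i + Jc n - n i := by
  funext i
  rw [Λ.d_chain]
  simp only [Pi.add_apply]
  have := le_Jc n i
  omega

/-- The prefix of degree `n` of the infinite extension chain of `ζ`. -/
noncomputable def pre (Λ : KGraph k) (ζ : Λ.Mor) (n : Fin k → ℕ) : Λ.Mor :=
  (Λ.fac_exists (Λ.chain ζ (Jc n)) n _ (Λ.pre_aux ζ n)).choose

lemma pre_spec (Λ : KGraph k) (ζ : Λ.Mor) (n : Fin k → ℕ) :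
    Λ.d (Λ.pre ζ n) = n ∧
      ∃ w, ∃ hc : Λ.src (Λ.pre ζ n) = Λ.rng w,
        Λ.comp (Λ.pre ζ n) w hc = Λ.chain ζ (Jc n) := by
  obtain ⟨w, hc, h1, h2, h3⟩ := (Λ.fac_exists (Λ.chain ζ (Jc n)) n _ (Λ.pre_aux ζ n)).choose_spec
  exact ⟨h1, w, hc, h3⟩

lemma d_pre (Λ : KGraph k) (ζ : Λ.Mor) (n : Fin k → ℕ) : Λ.d (Λ.pre ζ n) = n :=
  (Λ.pre_spec ζ n).1

lemma pre_unique (Λ : KGraph k) (ζ : Λ.Mor) {n : Fin k → ℕ} {j : ℕ} {u w : Λ.Mor}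
    {hc : Λ.src u = Λ.rng w} (he : Λ.comp u w hc = Λ.chain ζ j) (hd : Λ.d u = n) :
    u = Λ.pre ζ n := by
  obtain ⟨ρ₁, hc₁, he₁⟩ := Λ.chain_prefix ζ (le_max_left j (Jc n))
  obtain ⟨ρ₂, hc₂, he₂⟩ := Λ.chain_prefix ζ (le_max_right j (Jc n))
  obtain ⟨hdp, w', hc', he'⟩ := Λ.pre_spec ζ n
  obtain ⟨τ₁, hcτ₁, heτ₁, -⟩ := comp_extend he he₁
  obtain ⟨τ₂, hcτ₂, heτ₂, -⟩ := comp_extend he' he₂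
  exact (prefix_unique (hd.trans hdp.symm) (heτ₁.trans heτ₂.symm)).1

lemma pre_zero (Λ : KGraph k) (ζ : Λ.Mor) : Λ.pre ζ 0 = Λ.idm (Λ.rng ζ) := by
  have he : Λ.comp (Λ.idm (Λ.rng ζ)) ζ (Λ.src_idm _) = Λ.chain ζ 0 := Λ.comp_idm_left ζ _
  exact (Λ.pre_unique ζ he (Λ.d_idm _)).symm

lemma pre_d (Λ : KGraph k) (ζ : Λ.Mor) : Λ.pre ζ (Λ.d ζ) = ζ := by
  have he : Λ.comp ζ (Λ.idm (Λ.src ζ)) (Λ.rng_idm _).symm = Λ.chain ζ 0 :=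
    Λ.comp_idm_right ζ _
  exact (Λ.pre_unique ζ he rfl).symm

lemma seg_ex (Λ : KGraph k) (ζ : Λ.Mor) {m n : Fin k → ℕ} (h : m ≤ n) :
    ∃ w, ∃ hc : Λ.src (Λ.pre ζ m) = Λ.rng w,
      Λ.comp (Λ.pre ζ m) w hc = Λ.pre ζ n ∧ Λ.d w = fun i => n i - m i := by
  obtain ⟨hdn, w', hc', he'⟩ := Λ.pre_spec ζ n
  obtain ⟨u, w, hc, hdu, hdw, hcomp⟩ := Λ.fac_exists (Λ.pre ζ n) m (fun i => n i - m i)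
    (by rw [hdn]; funext i; simp only [Pi.add_apply]; have h2 : m i ≤ n i := h i; omega)
  obtain ⟨τ, hcτ, heτ, -⟩ := comp_extend hcomp he'
  have hu : u = Λ.pre ζ m := Λ.pre_unique ζ heτ hdu
  subst hu
  exact ⟨w, hc, hcomp, hdw⟩

/-- The canonical infinite path extending a finite path `ζ`. -/
noncomputable def pathExt (Λ : KGraph k) (ζ : Λ.Mor) : Λ.InfPath where
  seg m n h := (Λ.seg_ex ζ h).choose
  d_seg m n h := by
    obtain ⟨hc, -, hd⟩ := (Λ.seg_ex ζ h).choose_spec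
    exact hd
  src_rng m n p h1 h2 := by
    obtain ⟨hc1, hcomp1, -⟩ := (Λ.seg_ex ζ h1).choose_spec
    obtain ⟨hc2, hcomp2, -⟩ := (Λ.seg_ex ζ h2).choose_spec
    have e : Λ.src (Λ.seg_ex ζ h1).choose = Λ.src (Λ.pre ζ n) := by
      conv_rhs => rw [← hcomp1]
      rw [Λ.src_comp]
    exact e.trans hc2
  comp_seg m n p h1 h2 h3 := by
    obtain ⟨hc1, hcomp1, -⟩ := (Λ.seg_ex ζ h1).choose_spec
    obtain ⟨hc2, hcomp2, -⟩ := (Λ.seg_ex ζ h2).choose_spec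
    obtain ⟨hc3, hcomp3, -⟩ := (Λ.seg_ex ζ (h1.trans h2)).choose_spec
    obtain ⟨τ, hcτ, heτ, hcw, hτ⟩ := comp_extend hcomp1 hcomp2
    have := (prefix_unique (u := Λ.pre ζ m) rfl (heτ.trans hcomp3.symm)).2
    exact (comp_congr rfl rfl h3 hcw).trans (hτ.symm.trans this)

lemma head_pathExt (Λ : KGraph k) (ζ : Λ.Mor) : (Λ.pathExt ζ).head = Λ.rng ζ := by
  show Λ.src ((Λ.pathExt ζ).seg 0 0 le_rfl) = Λ.rng ζ
  obtain ⟨hc, hcomp, -⟩ := (Λ.seg_ex ζ (le_refl (0 : Fin k → ℕ))).choose_spec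
  have e : Λ.src ((Λ.pathExt ζ).seg 0 0 le_rfl) = Λ.src (Λ.pre ζ 0) := by
    show Λ.src (Λ.seg_ex ζ (le_refl (0 : Fin k → ℕ))).choose = Λ.src (Λ.pre ζ 0)
    conv_rhs => rw [← hcomp]
    rw [Λ.src_comp]
  rw [e, Λ.pre_zero, Λ.src_idm]

lemma pathExt_extends (Λ : KGraph k) (ζ : Λ.Mor) (h0 : (0 : Fin k → ℕ) ≤ Λ.d ζ) :
    (Λ.pathExt ζ).seg 0 (Λ.d ζ) h0 = ζ := by
  obtain ⟨hc, hcomp, hd⟩ := (Λ.seg_ex ζ h0).choose_spec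
  have key : Λ.comp (Λ.pre ζ 0) (Λ.seg_ex ζ h0).choose hc = ζ := hcomp.trans (Λ.pre_d ζ)
  have hrw : Λ.rng (Λ.seg_ex ζ h0).choose = Λ.rng ζ := by
    rw [← hc, Λ.pre_zero, Λ.src_idm]
  have h2 : Λ.pre ζ 0 = Λ.idm (Λ.rng (Λ.seg_ex ζ h0).choose) :=
    (Λ.pre_zero ζ).trans (congrArg Λ.idm hrw.symm)
  have e1 : Λ.comp (Λ.pre ζ 0) (Λ.seg_ex ζ h0).choose hc
      = (Λ.seg_ex ζ h0).choose :=
    (comp_congr h2 rfl hc (Λ.src_idm _)).trans (Λ.comp_idm_left _ _)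
  exact e1.symm.trans key

lemma InfPath.seg_congr (x : Λ.InfPath) {m n n' : Fin k → ℕ} (h : n = n') (hm : m ≤ n) :
    x.seg m n hm = x.seg m n' (h ▸ hm) := by subst h; rfl

lemma InfPath.seg_prefix (x : Λ.InfPath) {n p : Fin k → ℕ} (h1 : n ≤ p) :
    x.seg 0 p (fun i => Nat.zero_le _)
      = Λ.comp (x.seg 0 n (fun i => Nat.zero_le _)) (x.seg n p h1)
          (x.src_rng 0 n p (fun i => Nat.zero_le _) h1) :=
  (x.comp_seg 0 n p (fun i => Nat.zero_le _) h1 _).symm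

lemma InfPath.prefix_eq (x : Λ.InfPath) {p : Fin k → ℕ} {a ρ : Λ.Mor}
    {hcρ : Λ.src a = Λ.rng ρ} (hp : Λ.d a ≤ p)
    (hx : x.seg 0 p (fun i => Nat.zero_le _) = Λ.comp a ρ hcρ) :
    x.seg 0 (Λ.d a) (fun i => Nat.zero_le _) = a := by
  have e := x.seg_prefix hp
  have hd : Λ.d (x.seg 0 (Λ.d a) (fun i => Nat.zero_le _)) = Λ.d a := by
    rw [x.d_seg]; funext i; simp
  exact (prefix_unique hd (e.symm.trans hx)).1

end KGraph
namespace KGraph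

variable {k : ℕ} {Λ : KGraph k}

/-- The defining property of `Ψ(a) = b` for a pair `μ ∼ ν`: `νa = μb` with the
appropriate degree. -/
def PsiP (Λ : KGraph k) (μ ν a b : Λ.Mor) : Prop :=
  (Λ.d b = fun i => Λ.d ν i + Λ.d a i - Λ.d μ i) ∧
    ∃ (h1 : Λ.src ν = Λ.rng a) (h2 : Λ.src μ = Λ.rng b), Λ.comp ν a h1 = Λ.comp μ b h2

lemma psiP_unique {μ ν a b b' : Λ.Mor} (h : Λ.PsiP μ ν a b) (h' : Λ.PsiP μ ν a b') :
    b = b' := by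
  obtain ⟨hd, h1, h2, he⟩ := h
  obtain ⟨hd', h1', h2', he'⟩ := h'
  exact (prefix_unique (u := μ) rfl (he.symm.trans he')).2

lemma psi_seg {μ ν : Λ.Mor} (hs : Λ.sim μ ν) {x : Λ.InfPath} (hx : x.head = Λ.src μ)
    {a : Λ.Mor} (hxa : x.seg 0 (Λ.d a) (fun _ => Nat.zero_le _) = a)
    (had : ∀ i, Λ.d μ i ≤ Λ.d ν i + Λ.d a i) :
    Λ.PsiP μ ν a (x.seg 0 (fun i => Λ.d ν i + Λ.d a i - Λ.d μ i) (fun _ => Nat.zero_le _)) := by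
  obtain ⟨hsrc, H⟩ := hs
  have h3 := H x hx (fun i => Λ.d ν i + Λ.d a i) (fun i => had i) (fun i => Nat.le_add_right _ _)
  have hra : Λ.rng a = x.head := by rw [← hxa]; exact x.head_eq_rng _ _
  have hAν : x.seg 0 (fun i => (Λ.d ν i + Λ.d a i) - Λ.d ν i) (fun _ => Nat.zero_le _) = a := by
    rw [x.seg_congr (show (fun i => (Λ.d ν i + Λ.d a i) - Λ.d ν i) = Λ.d a from
      funext fun i => by omega)]
    exact hxa
  refine ⟨by rw [x.d_seg]; funext i; simp, hsrc.symm.trans (hx.symm.trans hra.symm),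
    hx.symm.trans (x.head_eq_rng _ _).symm, ?_⟩
  exact (comp_congr rfl hAν.symm (hsrc.symm.trans (hx.symm.trans hra.symm))
    (hsrc.symm.trans (hx.symm.trans (x.head_eq_rng _ _).symm))).trans h3.symm

/-- Every path with the correct range admits a `Ψ`-image. -/
lemma psiP_exists {μ ν a : Λ.Mor} (hs : Λ.sim μ ν) (ha : Λ.src μ = Λ.rng a)
    (had : ∀ i, Λ.d μ i ≤ Λ.d ν i + Λ.d a i) :
    ∃ b, Λ.PsiP μ ν a b := by
  refine ⟨_, psi_seg hs ?_ (Λ.pathExt_extends a (fun i => Nat.zero_le _)) had⟩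
  rw [Λ.head_pathExt]; exact ha.symm

/-- If `ζ` extends `Ψ(a)` and `d a ≤ d ζ`, then `ζ` extends `a`. -/
lemma psiP_left {μ ν a b ζ τ : Λ.Mor} (hs : Λ.sim μ ν) (hP : Λ.PsiP μ ν a b)
    {hcτ : Λ.src b = Λ.rng τ} (hζ : ζ = Λ.comp b τ hcτ) (hdle : Λ.d a ≤ Λ.d ζ)
    (had : ∀ i, Λ.d μ i ≤ Λ.d ν i + Λ.d a i) :
    ∃ ρ, ∃ hcρ : Λ.src a = Λ.rng ρ, ζ = Λ.comp a ρ hcρ := by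
  obtain ⟨hdb, h1, h2, he⟩ := hP
  obtain ⟨hsrc, H⟩ := hs
  set x := Λ.pathExt ζ with hxdef
  have hxζ : x.seg 0 (Λ.d ζ) (fun _ => Nat.zero_le _) = ζ :=
    Λ.pathExt_extends ζ (fun _ => Nat.zero_le _)
  have hdbζ : Λ.d b ≤ Λ.d ζ := by
    intro i
    have : Λ.d ζ = Λ.d b + Λ.d τ := by rw [hζ, Λ.d_comp]
    rw [this]; exact Nat.le_add_right _ _
  have hxb : x.seg 0 (Λ.d b) (fun _ => Nat.zero_le _) = b :=
    x.prefix_eq hdbζ (hxζ.trans hζ)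
  have hx : x.head = Λ.src μ := by
    rw [hxdef, Λ.head_pathExt, hζ, Λ.rng_comp]; exact h2.symm
  -- apply sim at n = dν + da
  have h3 := H x hx (fun i => Λ.d ν i + Λ.d a i) (fun i => had i) (fun i => Nat.le_add_right _ _)
  -- the μ-side prefix is b
  have hBμ : x.seg 0 (fun i => (Λ.d ν i + Λ.d a i) - Λ.d μ i) (fun _ => Nat.zero_le _) = b := by
    rw [x.seg_congr (show (fun i => (Λ.d ν i + Λ.d a i) - Λ.d μ i) = Λ.d b from
      funext fun i => by rw [hdb])]
    exact hxb
  -- hence the ν-side prefix is a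
  have hAν : x.seg 0 (fun i => (Λ.d ν i + Λ.d a i) - Λ.d ν i) (fun _ => Nat.zero_le _)
      = x.seg 0 (Λ.d a) (fun _ => Nat.zero_le _) :=
    x.seg_congr (funext fun i => by omega) _
  have hPμ : Λ.src μ = Λ.rng (x.seg 0 (fun i => (Λ.d ν i + Λ.d a i) - Λ.d μ i)
      (fun _ => Nat.zero_le _)) := hx.symm.trans (x.head_eq_rng _ _).symm
  have hPν : Λ.src ν = Λ.rng (x.seg 0 (fun i => (Λ.d ν i + Λ.d a i) - Λ.d ν i)
      (fun _ => Nat.zero_le _)) := (hsrc.symm.trans hx.symm).trans (x.head_eq_rng _ _).symm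
  have hPν' : Λ.src ν = Λ.rng (x.seg 0 (Λ.d a) (fun _ => Nat.zero_le _)) :=
    (hsrc.symm.trans hx.symm).trans (x.head_eq_rng _ _).symm
  have h4 : Λ.comp ν a h1 = Λ.comp ν (x.seg 0 (Λ.d a) (fun _ => Nat.zero_le _)) hPν' :=
    he.trans ((comp_congr rfl hBμ.symm h2 hPμ).trans (h3.trans (comp_congr rfl hAν hPν hPν')))
  have hxa : x.seg 0 (Λ.d a) (fun _ => Nat.zero_le _) = a :=
    ((prefix_unique (u := ν) rfl h4).2).symm
  -- conclude : a is a prefix of ζ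
  refine ⟨x.seg (Λ.d a) (Λ.d ζ) hdle,
    (congrArg Λ.src hxa).symm.trans (x.src_rng 0 (Λ.d a) (Λ.d ζ) (fun _ => Nat.zero_le _) hdle),
    ?_⟩
  exact hxζ.symm.trans ((x.seg_prefix hdle).trans (comp_congr hxa rfl _ _))
end KGraph
namespace KGraph

variable {k : ℕ} {Λ : KGraph k}

/-- If `ζ` extends `a` and `d Ψ(a) ≤ d ζ`, then `ζ` extends `Ψ(a)`. -/
lemma psiP_right {μ ν a b ζ ρ : Λ.Mor} (hs : Λ.sim μ ν) (hP : Λ.PsiP μ ν a b)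
    {hcρ : Λ.src a = Λ.rng ρ} (hζ : ζ = Λ.comp a ρ hcρ) (hdle : Λ.d b ≤ Λ.d ζ)
    (had : ∀ i, Λ.d μ i ≤ Λ.d ν i + Λ.d a i) :
    ∃ τ, ∃ hcτ : Λ.src b = Λ.rng τ, ζ = Λ.comp b τ hcτ := by
  set x := Λ.pathExt ζ with hxdef
  have hxζ : x.seg 0 (Λ.d ζ) (fun _ => Nat.zero_le _) = ζ :=
    Λ.pathExt_extends ζ (fun _ => Nat.zero_le _)
  have hdaζ : Λ.d a ≤ Λ.d ζ := by
    intro i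
    have h5 : Λ.d ζ = Λ.d a + Λ.d ρ := by rw [hζ, Λ.d_comp]
    rw [h5]; exact Nat.le_add_right _ _
  have hxa : x.seg 0 (Λ.d a) (fun _ => Nat.zero_le _) = a :=
    x.prefix_eq hdaζ (hxζ.trans hζ)
  have hx : x.head = Λ.src μ := by
    rw [hxdef, Λ.head_pathExt, hζ, Λ.rng_comp]
    exact (hs.choose.trans hP.2.choose).symm
  have hP' := psi_seg hs hx hxa had
  have hbe : x.seg 0 (fun i => Λ.d ν i + Λ.d a i - Λ.d μ i) (fun _ => Nat.zero_le _) = b :=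
    psiP_unique hP' hP
  have hle : (fun i => Λ.d ν i + Λ.d a i - Λ.d μ i) ≤ Λ.d ζ := by
    intro i
    have h6 : Λ.d b i ≤ Λ.d ζ i := hdle i
    have h7 : Λ.d b i = Λ.d ν i + Λ.d a i - Λ.d μ i := congrFun hP.1 i
    show Λ.d ν i + Λ.d a i - Λ.d μ i ≤ Λ.d ζ i
    omega
  refine ⟨x.seg (fun i => Λ.d ν i + Λ.d a i - Λ.d μ i) (Λ.d ζ) hle,
    (congrArg Λ.src hbe).symm.trans (x.src_rng _ _ _ (fun _ => Nat.zero_le _) hle), ?_⟩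
  exact hxζ.symm.trans ((x.seg_prefix hle).trans (comp_congr hbe rfl _ _))

end KGraph

namespace CKFamily

open KGraph

variable {k : ℕ} {Λ : KGraph k} {A : Type*} [NonUnitalCStarAlgebra A] (f : CKFamily Λ A)

lemma S_comp {a b : Λ.Mor} (h : Λ.src a = Λ.rng b) :
    f.S (Λ.comp a b h) = f.S a * f.S b := (f.S_mul a b h).symm

lemma p_mul_S {v : Λ.Obj} {a : Λ.Mor} (ha : Λ.rng a = v) :
    f.S (Λ.idm v) * f.S a = f.S a := by
  subst ha
  rw [f.S_mul _ _ (Λ.src_idm _), Λ.comp_idm_left]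

lemma S_mul_p {v : Λ.Obj} {a : Λ.Mor} (ha : Λ.src a = v) :
    f.S a * f.S (Λ.idm v) = f.S a := by
  subst ha
  rw [f.S_mul _ _ (Λ.rng_idm _).symm, Λ.comp_idm_right]

lemma star_S_comp {a b : Λ.Mor} (h : Λ.src a = Λ.rng b) :
    star (f.S a) * f.S (Λ.comp a b h) = f.S b := by
  rw [f.S_comp h, ← mul_assoc, f.S_ck3, f.p_mul_S h.symm]

lemma S_comp_star {a b : Λ.Mor} (h : Λ.src a = Λ.rng b) :
    star (f.S (Λ.comp a b h)) * f.S a = star (f.S b) := by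
  calc star (f.S (Λ.comp a b h)) * f.S a
      = star (star (f.S a) * f.S (Λ.comp a b h)) := by rw [star_mul, star_star]
    _ = star (f.S b) := by rw [f.star_S_comp]

lemma S_ne_zero (hnz : ∀ v, f.S (Λ.idm v) ≠ 0) (a : Λ.Mor) : f.S a ≠ 0 := by
  intro h
  exact hnz (Λ.src a) (by rw [← f.S_ck3 a, h, star_zero, zero_mul])

lemma q_mem_diag (lam : Λ.Mor) : f.S lam * star (f.S lam) ∈ f.diag :=
  subset_closure (NonUnitalStarAlgebra.subset_adjoin ℂ _ ⟨lam, rfl⟩)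

lemma q_eq_sum (lam : Λ.Mor) (nn : Fin k → ℕ) :
    f.S lam * star (f.S lam) =
      ∑ η ∈ (Λ.rowFinite (Λ.src lam) nn).toFinset,
        (f.S lam * f.S η) * star (f.S lam * f.S η) := by
  have h1 : f.S lam * star (f.S lam)
      = f.S lam * (f.S (Λ.idm (Λ.src lam)) * star (f.S lam)) := by
    rw [← mul_assoc, f.S_mul_p rfl]
  rw [h1, f.S_ck4 (Λ.src lam) nn, Finset.sum_mul, Finset.mul_sum]
  apply Finset.sum_congr rfl
  intro η hη
  simp only [star_mul, mul_assoc]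

end CKFamily
namespace CKFamily

open KGraph

variable {k : ℕ} {Λ : KGraph k} {A : Type*} [NonUnitalCStarAlgebra A] (f : CKFamily Λ A)

/-- The key computation: if `s_μ s_ν^*` commutes with the diagonal, then any extension
`μa` of `μ` factors through `ν`, with associated range-projection comparisons. -/
lemma lemC (hnz : ∀ v, f.S (Λ.idm v) ≠ 0) {μ ν : Λ.Mor}
    (hsv : Λ.src μ = Λ.src ν)
    (hw : ∀ b ∈ f.diag, (f.S μ * star (f.S ν)) * b = b * (f.S μ * star (f.S ν)))
    {a : Λ.Mor} (ha : Λ.src μ = Λ.rng a)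
    (hdeg : ∀ i, Λ.d ν i ≤ Λ.d μ i + Λ.d a i) :
    ∃ g, ∃ hg : Λ.src ν = Λ.rng g,
      Λ.comp μ a ha = Λ.comp ν g hg ∧
      (Λ.d g = fun i => Λ.d μ i + Λ.d a i - Λ.d ν i) ∧
      f.S a * star (f.S a) * f.S g = f.S g ∧
      f.S g * star (f.S g) * f.S a = f.S a := by
  have hνa : Λ.src ν = Λ.rng a := hsv.symm.trans ha
  have hcomm := hw _ (f.q_mem_diag (Λ.comp μ a ha))
  have hsl : Λ.src (Λ.comp μ a ha) = Λ.src a := Λ.src_comp _ _ _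
  have hq_w : (f.S (Λ.comp μ a ha) * star (f.S (Λ.comp μ a ha))) * (f.S μ * star (f.S ν))
      = f.S (Λ.comp μ a ha) * star (f.S (Λ.comp ν a hνa)) := by
    have e1 : star (f.S (Λ.comp μ a ha)) * f.S μ = star (f.S a) := f.S_comp_star ha
    calc (f.S (Λ.comp μ a ha) * star (f.S (Λ.comp μ a ha))) * (f.S μ * star (f.S ν))
        = f.S (Λ.comp μ a ha) * ((star (f.S (Λ.comp μ a ha)) * f.S μ) * star (f.S ν)) := by
          simp only [mul_assoc]
      _ = f.S (Λ.comp μ a ha) * (star (f.S a) * star (f.S ν)) := by rw [e1]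
      _ = f.S (Λ.comp μ a ha) * star (f.S (Λ.comp ν a hνa)) := by
          rw [f.S_comp hνa, star_mul]
  obtain ⟨e1m, g, hce0, hde1, hdg, hfac0⟩ := Λ.fac_exists (Λ.comp μ a ha) (Λ.d ν)
    (fun i => Λ.d μ i + Λ.d a i - Λ.d ν i)
    (by rw [Λ.d_comp]; funext i; simp only [Pi.add_apply]; have := hdeg i; omega)
  by_cases hεν : e1m = ν
  case neg =>
    exfalso
    have hz : star (f.S ν) * f.S (Λ.comp μ a ha) = 0 := by
      rw [← hfac0, f.S_comp hce0, ← mul_assoc,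
        f.S_ck3' ν e1m hde1.symm (fun hh => hεν hh.symm), zero_mul]
    have hwq : (f.S μ * star (f.S ν)) * (f.S (Λ.comp μ a ha) * star (f.S (Λ.comp μ a ha)))
        = 0 := by
      calc (f.S μ * star (f.S ν)) * (f.S (Λ.comp μ a ha) * star (f.S (Λ.comp μ a ha)))
          = f.S μ * ((star (f.S ν) * f.S (Λ.comp μ a ha)) * star (f.S (Λ.comp μ a ha))) := by
            simp only [mul_assoc]
        _ = 0 := by rw [hz, zero_mul, mul_zero]
    have h0 : f.S (Λ.comp μ a ha) * star (f.S (Λ.comp ν a hνa)) = 0 := by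
      rw [← hq_w, ← hcomm, hwq]
    have h2 : f.S (Λ.comp μ a ha) * star (f.S (Λ.comp ν a hνa)) * f.S (Λ.comp ν a hνa)
        = 0 := by rw [h0, zero_mul]
    rw [mul_assoc, f.S_ck3,
      f.S_mul_p (show Λ.src (Λ.comp μ a ha) = Λ.src (Λ.comp ν a hνa) by
        rw [Λ.src_comp, Λ.src_comp])] at h2
    exact f.S_ne_zero hnz _ h2
  case pos =>
    have hce : Λ.src ν = Λ.rng g := hεν ▸ hce0
    have hfac : Λ.comp ν g hce = Λ.comp μ a ha :=
      (comp_congr hεν.symm rfl hce hce0).trans hfac0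
    have hμg : Λ.src μ = Λ.rng g := hsv.trans hce
    have hWq : (f.S μ * star (f.S ν)) * (f.S (Λ.comp μ a ha) * star (f.S (Λ.comp μ a ha)))
        = f.S (Λ.comp μ g hμg) * star (f.S (Λ.comp μ a ha)) := by
      have e2 : star (f.S ν) * f.S (Λ.comp μ a ha) = f.S g := by
        rw [← hfac, f.star_S_comp]
      calc (f.S μ * star (f.S ν)) * (f.S (Λ.comp μ a ha) * star (f.S (Λ.comp μ a ha)))
          = f.S μ * ((star (f.S ν) * f.S (Λ.comp μ a ha)) * star (f.S (Λ.comp μ a ha))) := by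
            simp only [mul_assoc]
        _ = f.S μ * (f.S g * star (f.S (Λ.comp μ a ha))) := by rw [e2]
        _ = f.S (Λ.comp μ g hμg) * star (f.S (Λ.comp μ a ha)) := by
            rw [f.S_comp hμg, mul_assoc]
    have E : f.S (Λ.comp μ g hμg) * star (f.S (Λ.comp μ a ha))
        = f.S (Λ.comp μ a ha) * star (f.S (Λ.comp ν a hνa)) := by
      rw [← hWq, hcomm, hq_w]
    have E' : f.S g * star (f.S (Λ.comp μ a ha)) = f.S a * star (f.S (Λ.comp ν a hνa)) := by
      have h6 : star (f.S μ) * (f.S (Λ.comp μ g hμg) * star (f.S (Λ.comp μ a ha)))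
          = star (f.S μ) * (f.S (Λ.comp μ a ha) * star (f.S (Λ.comp ν a hνa))) := by rw [E]
      rwa [← mul_assoc, ← mul_assoc, f.star_S_comp hμg, f.star_S_comp ha] at h6
    have e5 : star (f.S (Λ.comp ν a hνa)) * f.S (Λ.comp μ a ha) = star (f.S a) * f.S g := by
      rw [← hfac, f.S_comp hνa, f.S_comp hce, star_mul, mul_assoc,
        ← mul_assoc (star (f.S ν)) (f.S ν) (f.S g), f.S_ck3, f.p_mul_S hce.symm]
    have e6 : star (f.S (Λ.comp μ a ha)) * f.S (Λ.comp ν a hνa) = star (f.S g) * f.S a := by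
      have h6 := congrArg star e5
      simp only [star_mul, star_star, mul_assoc] at h6
      simpa only [mul_assoc] using h6
    have hsg : Λ.src g = Λ.src a := by
      have h5 := congrArg Λ.src hfac
      rwa [Λ.src_comp, Λ.src_comp] at h5
    have A1 : f.S a * star (f.S a) * f.S g = f.S g := by
      have h7 : (f.S g * star (f.S (Λ.comp μ a ha))) * f.S (Λ.comp μ a ha)
          = (f.S a * star (f.S (Λ.comp ν a hνa))) * f.S (Λ.comp μ a ha) := by rw [E']
      rw [mul_assoc, f.S_ck3,
        f.S_mul_p (show Λ.src g = Λ.src (Λ.comp μ a ha) from hsg.trans hsl.symm),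
        mul_assoc, e5] at h7
      rw [mul_assoc]
      exact h7.symm
    have A2 : f.S g * star (f.S g) * f.S a = f.S a := by
      have h9 : (f.S g * star (f.S (Λ.comp μ a ha))) * f.S (Λ.comp ν a hνa)
          = (f.S a * star (f.S (Λ.comp ν a hνa))) * f.S (Λ.comp ν a hνa) := by rw [E']
      rw [mul_assoc, e6, mul_assoc, f.S_ck3,
        f.S_mul_p (show Λ.src a = Λ.src (Λ.comp ν a hνa) from (Λ.src_comp ν a hνa).symm)] at h9
      rw [mul_assoc]
      exact h9
    exact ⟨g, hce, hfac.symm, hdg, A1, A2⟩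

lemma fwd_core (hnz : ∀ v, f.S (Λ.idm v) ≠ 0) {μ ν : Λ.Mor}
    (hsv : Λ.src μ = Λ.src ν)
    (hw : ∀ b ∈ f.diag, (f.S μ * star (f.S ν)) * b = b * (f.S μ * star (f.S ν)))
    {a ξ a' : Λ.Mor} (ha : Λ.src μ = Λ.rng a) (hcξ : Λ.src a = Λ.rng ξ)
    (hA : Λ.comp a ξ hcξ = a')
    (hdeg : ∀ i, Λ.d ν i ≤ Λ.d μ i + Λ.d a i) :
    ∃ g, ∃ hg : Λ.src ν = Λ.rng g, Λ.comp μ a ha = Λ.comp ν g hg ∧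
      (Λ.d g = fun i => Λ.d μ i + Λ.d a i - Λ.d ν i) ∧ star (f.S g) * f.S a' ≠ 0 := by
  obtain ⟨g, hg, hce, hdg, A1, A2⟩ := f.lemC hnz hsv hw ha hdeg
  have ha' : Λ.src μ = Λ.rng a' := by rw [← hA, Λ.rng_comp]; exact ha
  have hda' : Λ.d a' = Λ.d a + Λ.d ξ := by rw [← hA, Λ.d_comp]
  have hdeg' : ∀ i, Λ.d ν i ≤ Λ.d μ i + Λ.d a' i := by
    intro i
    have h1 := hdeg i
    have h2 : Λ.d a' i = Λ.d a i + Λ.d ξ i := by rw [hda']; rfl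
    omega
  obtain ⟨g', hg', hce', hdg', A1', A2'⟩ := f.lemC hnz hsv hw ha' hdeg'
  have hsag : Λ.src a = Λ.src g := by
    have h := congrArg Λ.src hce
    rwa [Λ.src_comp, Λ.src_comp] at h
  have hgξ : Λ.src g = Λ.rng ξ := hsag.symm.trans hcξ
  have hνgξ : Λ.src ν = Λ.rng (Λ.comp g ξ hgξ) := by rw [Λ.rng_comp]; exact hg
  -- ν g' = ν (g ξ)
  have hE : Λ.comp ν g' hg' = Λ.comp ν (Λ.comp g ξ hgξ) hνgξ := by
    have s1 : Λ.comp ν g' hg' = Λ.comp μ a' ha' := hce'.symm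
    have s2 : Λ.comp μ a' ha' = Λ.comp μ (Λ.comp a ξ hcξ) (by rw [Λ.rng_comp]; exact ha) :=
      comp_congr rfl hA.symm ha' (by rw [Λ.rng_comp]; exact ha)
    have s3 := Λ.comp_assoc μ a ξ ha hcξ (by rw [Λ.src_comp]; exact hcξ)
      (by rw [Λ.rng_comp]; exact ha)
    have s4 : Λ.comp (Λ.comp μ a ha) ξ (by rw [Λ.src_comp]; exact hcξ)
        = Λ.comp (Λ.comp ν g hg) ξ (by rw [Λ.src_comp]; exact hgξ) :=
      comp_congr hce rfl _ _
    have s5 := Λ.comp_assoc ν g ξ hg hgξ (by rw [Λ.src_comp]; exact hgξ) hνgξ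
    exact s1.trans (s2.trans (s3.symm.trans (s4.trans s5)))
  have hgg' : g' = Λ.comp g ξ hgξ := (prefix_unique (u := ν) rfl hE).2
  -- q_g absorbs S g'
  have hq1 : f.S g * star (f.S g) * f.S g' = f.S g' := by
    rw [hgg', f.S_comp hgξ]
    calc f.S g * star (f.S g) * (f.S g * f.S ξ)
        = f.S g * ((star (f.S g) * f.S g) * f.S ξ) := by simp only [mul_assoc]
      _ = f.S g * (f.S (Λ.idm (Λ.src g)) * f.S ξ) := by rw [f.S_ck3]
      _ = f.S g * f.S ξ := by rw [f.p_mul_S hgξ.symm]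
  -- q_g absorbs S a'
  have hq2 : f.S g * star (f.S g) * f.S a' = f.S a' := by
    conv_lhs => rw [← A2']
    calc f.S g * star (f.S g) * (f.S g' * star (f.S g') * f.S a')
        = (f.S g * star (f.S g) * f.S g') * (star (f.S g') * f.S a') := by
          simp only [mul_assoc]
      _ = f.S g' * (star (f.S g') * f.S a') := by rw [hq1]
      _ = f.S g' * star (f.S g') * f.S a' := by rw [mul_assoc]
      _ = f.S a' := A2'
  refine ⟨g, hg, hce, hdg, fun h0 => ?_⟩
  have : f.S a' = 0 := by
    rw [← hq2, mul_assoc, h0, mul_zero]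
  exact f.S_ne_zero hnz a' this

lemma fwd (hnz : ∀ v, f.S (Λ.idm v) ≠ 0) {μ ν : Λ.Mor}
    (hsv : Λ.src μ = Λ.src ν)
    (hw : ∀ b ∈ f.diag, (f.S μ * star (f.S ν)) * b = b * (f.S μ * star (f.S ν))) :
    Λ.sim μ ν := by
  refine ⟨hsv, ?_⟩
  intro x hx n hdμ hdν
  have ha : Λ.src μ = Λ.rng (x.seg 0 (fun i => n i - Λ.d μ i) (fun _ => Nat.zero_le _)) :=
    hx.symm.trans (x.head_eq_rng _ _).symm
  have hle : (fun i => n i - Λ.d μ i) ≤ n := fun i => Nat.sub_le _ _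
  have hcξ : Λ.src (x.seg 0 (fun i => n i - Λ.d μ i) (fun _ => Nat.zero_le _))
      = Λ.rng (x.seg (fun i => n i - Λ.d μ i) n hle) :=
    x.src_rng 0 _ n (fun _ => Nat.zero_le _) hle
  have hA : Λ.comp (x.seg 0 (fun i => n i - Λ.d μ i) (fun _ => Nat.zero_le _))
      (x.seg (fun i => n i - Λ.d μ i) n hle) hcξ = x.seg 0 n (fun _ => Nat.zero_le _) :=
    x.comp_seg 0 _ n (fun _ => Nat.zero_le _) hle hcξ
  have hdeg : ∀ i, Λ.d ν i ≤ Λ.d μ i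
      + Λ.d (x.seg 0 (fun i => n i - Λ.d μ i) (fun _ => Nat.zero_le _)) i := by
    intro i
    have h1 : Λ.d μ i ≤ n i := hdμ i
    have h2 : Λ.d ν i ≤ n i := hdν i
    have h3 : Λ.d (x.seg 0 (fun i => n i - Λ.d μ i) (fun _ => Nat.zero_le _)) i
        = n i - Λ.d μ i := by rw [x.d_seg]; simp
    rw [h3]
    omega
  obtain ⟨g, hg, hce, hdg, hne⟩ := f.fwd_core hnz hsv hw ha hcξ hA hdeg
  -- identify g with the ν-prefix of x
  have hleν : (fun i => n i - Λ.d ν i) ≤ n := fun i => Nat.sub_le _ _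
  have hcb : Λ.src (x.seg 0 (fun i => n i - Λ.d ν i) (fun _ => Nat.zero_le _))
      = Λ.rng (x.seg (fun i => n i - Λ.d ν i) n hleν) :=
    x.src_rng 0 _ n (fun _ => Nat.zero_le _) hleν
  have hB : Λ.comp (x.seg 0 (fun i => n i - Λ.d ν i) (fun _ => Nat.zero_le _))
      (x.seg (fun i => n i - Λ.d ν i) n hleν) hcb = x.seg 0 n (fun _ => Nat.zero_le _) :=
    x.comp_seg 0 _ n (fun _ => Nat.zero_le _) hleν hcb
  have hdgb : Λ.d g = Λ.d (x.seg 0 (fun i => n i - Λ.d ν i) (fun _ => Nat.zero_le _)) := by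
    rw [hdg]
    funext i
    have h2 : Λ.d (x.seg 0 (fun i => n i - Λ.d μ i) (fun _ => Nat.zero_le _)) i
        = n i - Λ.d μ i := by rw [x.d_seg]; simp
    have h3 : Λ.d (x.seg 0 (fun i => n i - Λ.d ν i) (fun _ => Nat.zero_le _)) i
        = n i - Λ.d ν i := by rw [x.d_seg]; simp
    show Λ.d μ i + Λ.d (x.seg 0 (fun i => n i - Λ.d μ i) (fun _ => Nat.zero_le _)) i
        - Λ.d ν i = Λ.d (x.seg 0 (fun i => n i - Λ.d ν i) (fun _ => Nat.zero_le _)) i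
    rw [h2, h3]
    have h1 : Λ.d μ i ≤ n i := hdμ i
    have h4 : Λ.d ν i ≤ n i := hdν i
    omega
  have hgb : g = x.seg 0 (fun i => n i - Λ.d ν i) (fun _ => Nat.zero_le _) := by
    by_contra hne2
    apply hne
    rw [← hB, f.S_comp hcb, ← mul_assoc, f.S_ck3' g _ hdgb hne2, zero_mul]
  exact hce.trans (comp_congr rfl hgb hg
    ((hsv.symm.trans hx.symm).trans (x.head_eq_rng _ _).symm))
end CKFamily
namespace CKFamily

open KGraph

variable {k : ℕ} {Λ : KGraph k} {A : Type*} [NonUnitalCStarAlgebra A] (f : CKFamily Λ A)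

/-- If `μ ∼ ν` then the range projections of `a` and `Ψ(a)` agree. -/
lemma q_psiP {μ ν : Λ.Mor} (hs : Λ.sim μ ν) {a b : Λ.Mor} (hP : Λ.PsiP μ ν a b)
    (had : ∀ i, Λ.d μ i ≤ Λ.d ν i + Λ.d a i) :
    f.S a * star (f.S a) = f.S b * star (f.S b) := by
  obtain ⟨hdb, h1, h2, he⟩ := hP
  have part1 : (f.S a * star (f.S a)) * (f.S b * star (f.S b)) = f.S b * star (f.S b) := by
    rw [f.q_eq_sum b (Λ.d μ), Finset.mul_sum]
    apply Finset.sum_congr rfl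
    intro ξ hξ
    obtain ⟨hrξ, hdξ⟩ := (Λ.rowFinite (Λ.src b) (Λ.d μ)).mem_toFinset.mp hξ
    have hcbξ : Λ.src b = Λ.rng ξ := hrξ.symm
    have hdle : Λ.d a ≤ Λ.d (Λ.comp b ξ hcbξ) := by
      intro i
      have h3 : Λ.d (Λ.comp b ξ hcbξ) i = Λ.d b i + Λ.d ξ i := by rw [Λ.d_comp]; rfl
      have h4 : Λ.d b i = Λ.d ν i + Λ.d a i - Λ.d μ i := by rw [hdb]
      have h5 : Λ.d ξ i = Λ.d μ i := by rw [hdξ]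
      have h6 := had i
      show Λ.d a i ≤ Λ.d (Λ.comp b ξ hcbξ) i
      omega
    obtain ⟨ρ, hcρ, hζ⟩ := psiP_left hs ⟨hdb, h1, h2, he⟩ rfl hdle had
    have hSbξ : f.S b * f.S ξ = f.S a * f.S ρ := by
      rw [← f.S_comp hcbξ, hζ, f.S_comp hcρ]
    rw [hSbξ]
    have habs : (f.S a * star (f.S a)) * (f.S a * f.S ρ) = f.S a * f.S ρ := by
      calc (f.S a * star (f.S a)) * (f.S a * f.S ρ)
          = f.S a * ((star (f.S a) * f.S a) * f.S ρ) := by simp only [mul_assoc]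
        _ = f.S a * (f.S (Λ.idm (Λ.src a)) * f.S ρ) := by rw [f.S_ck3]
        _ = f.S a * f.S ρ := by rw [f.p_mul_S hcρ.symm]
    rw [← mul_assoc, habs]
  have part2 : (f.S b * star (f.S b)) * (f.S a * star (f.S a)) = f.S a * star (f.S a) := by
    rw [f.q_eq_sum a (Λ.d ν), Finset.mul_sum]
    apply Finset.sum_congr rfl
    intro η hη
    obtain ⟨hrη, hdη⟩ := (Λ.rowFinite (Λ.src a) (Λ.d ν)).mem_toFinset.mp hη
    have hcaη : Λ.src a = Λ.rng η := hrη.symm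
    have hdle : Λ.d b ≤ Λ.d (Λ.comp a η hcaη) := by
      intro i
      have h3 : Λ.d (Λ.comp a η hcaη) i = Λ.d a i + Λ.d η i := by rw [Λ.d_comp]; rfl
      have h4 : Λ.d b i = Λ.d ν i + Λ.d a i - Λ.d μ i := by rw [hdb]
      have h5 : Λ.d η i = Λ.d ν i := by rw [hdη]
      show Λ.d b i ≤ Λ.d (Λ.comp a η hcaη) i
      omega
    obtain ⟨τ, hcτ, hζ⟩ := psiP_right hs ⟨hdb, h1, h2, he⟩ rfl hdle had
    have hSaη : f.S a * f.S η = f.S b * f.S τ := by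
      rw [← f.S_comp hcaη, hζ, f.S_comp hcτ]
    rw [hSaη]
    have habs : (f.S b * star (f.S b)) * (f.S b * f.S τ) = f.S b * f.S τ := by
      calc (f.S b * star (f.S b)) * (f.S b * f.S τ)
          = f.S b * ((star (f.S b) * f.S b) * f.S τ) := by simp only [mul_assoc]
        _ = f.S b * (f.S (Λ.idm (Λ.src b)) * f.S τ) := by rw [f.S_ck3]
        _ = f.S b * f.S τ := by rw [f.p_mul_S hcτ.symm]
    rw [← mul_assoc, habs]
  have e7 : star ((f.S a * star (f.S a)) * (f.S b * star (f.S b)))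
      = (f.S b * star (f.S b)) * (f.S a * star (f.S a)) := by
    rw [star_mul, star_mul, star_mul, star_star, star_star]
  calc f.S a * star (f.S a) = (f.S b * star (f.S b)) * (f.S a * star (f.S a)) := part2.symm
    _ = star ((f.S a * star (f.S a)) * (f.S b * star (f.S b))) := e7.symm
    _ = star (f.S b * star (f.S b)) := by rw [part1]
    _ = f.S b * star (f.S b) := by rw [star_mul, star_star]

lemma comm_big {μ ν : Λ.Mor} (hs : Λ.sim μ ν) (lam : Λ.Mor)
    (h1 : ∀ i, Λ.d ν i ≤ Λ.d lam i) (h2 : ∀ i, Λ.d μ i ≤ Λ.d lam i) :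
    (f.S μ * star (f.S ν)) * (f.S lam * star (f.S lam))
      = (f.S lam * star (f.S lam)) * (f.S μ * star (f.S ν)) := by
  have hsv : Λ.src μ = Λ.src ν := hs.choose
  obtain ⟨e1, a, hce, hde1, hda, hfac⟩ := Λ.fac_exists lam (Λ.d ν)
    (fun i => Λ.d lam i - Λ.d ν i)
    (by funext i; simp only [Pi.add_apply]; have := h1 i; omega)
  by_cases hεν : e1 = ν
  · have hceν : Λ.src ν = Λ.rng a := hεν ▸ hce
    have hfacν : Λ.comp ν a hceν = lam := (comp_congr hεν.symm rfl hceν hce).trans hfac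
    have ha : Λ.src μ = Λ.rng a := hsv.trans hceν
    have had : ∀ i, Λ.d μ i ≤ Λ.d ν i + Λ.d a i := by
      intro i
      have h3 : Λ.d lam = Λ.d ν + Λ.d a := by rw [← hfacν, Λ.d_comp]
      have h4 : Λ.d lam i = Λ.d ν i + Λ.d a i := by rw [h3]; rfl
      have := h2 i
      omega
    obtain ⟨b, hP⟩ := Λ.psiP_exists hs ha had
    have hq := f.q_psiP hs hP had
    obtain ⟨hdb, hb1, hb2, hbe⟩ := hP
    have hlamb : lam = Λ.comp μ b hb2 := hfacν.symm.trans hbe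
    have eA : star (f.S ν) * f.S lam = f.S a := by rw [← hfacν, f.star_S_comp]
    have eB : star (f.S lam) = star (f.S a) * star (f.S ν) := by
      rw [← hfacν, f.S_comp hceν, star_mul]
    have eC : star (f.S lam) * f.S μ = star (f.S b) := by
      rw [hlamb]; exact f.S_comp_star hb2
    have eD : f.S lam = f.S μ * f.S b := by rw [hlamb, f.S_comp]
    have R : (f.S lam * star (f.S lam)) * (f.S μ * star (f.S ν))
        = f.S μ * (f.S b * (star (f.S b) * star (f.S ν))) := by
      calc (f.S lam * star (f.S lam)) * (f.S μ * star (f.S ν))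
          = f.S lam * ((star (f.S lam) * f.S μ) * star (f.S ν)) := by simp only [mul_assoc]
        _ = f.S lam * (star (f.S b) * star (f.S ν)) := by rw [eC]
        _ = (f.S μ * f.S b) * (star (f.S b) * star (f.S ν)) := by rw [eD]
        _ = f.S μ * (f.S b * (star (f.S b) * star (f.S ν))) := by simp only [mul_assoc]
    calc (f.S μ * star (f.S ν)) * (f.S lam * star (f.S lam))
        = f.S μ * ((star (f.S ν) * f.S lam) * star (f.S lam)) := by simp only [mul_assoc]
      _ = f.S μ * (f.S a * (star (f.S a) * star (f.S ν))) := by rw [eA, eB]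
      _ = f.S μ * ((f.S a * star (f.S a)) * star (f.S ν)) := by simp only [mul_assoc]
      _ = f.S μ * ((f.S b * star (f.S b)) * star (f.S ν)) := by rw [hq]
      _ = f.S μ * (f.S b * (star (f.S b) * star (f.S ν))) := by simp only [mul_assoc]
      _ = (f.S lam * star (f.S lam)) * (f.S μ * star (f.S ν)) := R.symm
  · obtain ⟨e1', c, hce', hde1', hdc, hfac'⟩ := Λ.fac_exists lam (Λ.d μ)
      (fun i => Λ.d lam i - Λ.d μ i)
      (by funext i; simp only [Pi.add_apply]; have := h2 i; omega)
    by_cases hεμ : e1' = μ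
    · exfalso
      have hceμ : Λ.src μ = Λ.rng c := hεμ ▸ hce'
      have hfacμ : Λ.comp μ c hceμ = lam := (comp_congr hεμ.symm rfl hceμ hce').trans hfac'
      obtain ⟨hsrc, H⟩ := hs
      have hx : (Λ.pathExt c).head = Λ.src μ := by rw [Λ.head_pathExt]; exact hceμ.symm
      have hxc : (Λ.pathExt c).seg 0 (Λ.d c) (fun _ => Nat.zero_le _) = c :=
        Λ.pathExt_extends c _
      have h3 := H (Λ.pathExt c) hx (Λ.d lam) (fun i => h2 i) (fun i => h1 i)
      have hFc : (fun i => Λ.d lam i - Λ.d μ i) = Λ.d c := by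
        funext i
        have h5 : Λ.d c i = Λ.d lam i - Λ.d μ i := by rw [hdc]
        omega
      have hCμ : (Λ.pathExt c).seg 0 (fun i => Λ.d lam i - Λ.d μ i)
          (fun _ => Nat.zero_le _) = c := by
        rw [(Λ.pathExt c).seg_congr hFc]; exact hxc
      have h4 : Λ.comp μ c hceμ
          = Λ.comp ν ((Λ.pathExt c).seg 0 (fun i => Λ.d lam i - Λ.d ν i)
              (fun _ => Nat.zero_le _))
            ((hsrc.symm.trans hx.symm).trans ((Λ.pathExt c).head_eq_rng _ _).symm) :=
        (comp_congr rfl hCμ.symm hceμ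
          (hx.symm.trans ((Λ.pathExt c).head_eq_rng _ _).symm)).trans h3
      have h6 := h4.symm.trans (hfacμ.trans hfac.symm)
      exact hεν ((prefix_unique hde1.symm h6).1).symm
    · have hzL : star (f.S ν) * f.S lam = 0 := by
        rw [← hfac, f.S_comp hce, ← mul_assoc,
          f.S_ck3' ν e1 hde1.symm (fun hh => hεν hh.symm), zero_mul]
      have hzR : star (f.S μ) * f.S lam = 0 := by
        rw [← hfac', f.S_comp hce', ← mul_assoc,
          f.S_ck3' μ e1' hde1'.symm (fun hh => hεμ hh.symm), zero_mul]
      have hzR' : star (f.S lam) * f.S μ = 0 := by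
        have h7 := congrArg star hzR
        rwa [star_mul, star_star, star_zero] at h7
      calc (f.S μ * star (f.S ν)) * (f.S lam * star (f.S lam))
          = f.S μ * ((star (f.S ν) * f.S lam) * star (f.S lam)) := by simp only [mul_assoc]
        _ = 0 := by rw [hzL, zero_mul, mul_zero]
        _ = f.S lam * ((star (f.S lam) * f.S μ) * star (f.S ν)) := by
            rw [hzR', zero_mul, mul_zero]
        _ = (f.S lam * star (f.S lam)) * (f.S μ * star (f.S ν)) := by simp only [mul_assoc]

lemma comm_q {μ ν : Λ.Mor} (hs : Λ.sim μ ν) (lam : Λ.Mor) :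
    (f.S μ * star (f.S ν)) * (f.S lam * star (f.S lam))
      = (f.S lam * star (f.S lam)) * (f.S μ * star (f.S ν)) := by
  rw [f.q_eq_sum lam (fun i => Λ.d μ i + Λ.d ν i), Finset.mul_sum, Finset.sum_mul]
  apply Finset.sum_congr rfl
  intro η hη
  obtain ⟨hrη, hdη⟩ :=
    (Λ.rowFinite (Λ.src lam) (fun i => Λ.d μ i + Λ.d ν i)).mem_toFinset.mp hη
  rw [f.S_mul lam η hrη.symm]
  apply f.comm_big hs
  · intro i
    have h3 : Λ.d (Λ.comp lam η hrη.symm) i = Λ.d lam i + Λ.d η i := by rw [Λ.d_comp]; rfl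
    have h4 : Λ.d η i = Λ.d μ i + Λ.d ν i := by rw [hdη]
    omega
  · intro i
    have h3 : Λ.d (Λ.comp lam η hrη.symm) i = Λ.d lam i + Λ.d η i := by rw [Λ.d_comp]; rfl
    have h4 : Λ.d η i = Λ.d μ i + Λ.d ν i := by rw [hdη]
    omega

lemma bwd {μ ν : Λ.Mor} (hs : Λ.sim μ ν) :
    ∀ b ∈ f.diag, (f.S μ * star (f.S ν)) * b = b * (f.S μ * star (f.S ν)) := by
  intro b hb
  have main : ∀ c ∈ NonUnitalStarAlgebra.adjoin ℂ
      {a : A | ∃ lam : Λ.Mor, a = f.S lam * star (f.S lam)},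
      (f.S μ * star (f.S ν)) * c = c * (f.S μ * star (f.S ν)) ∧
        star (f.S μ * star (f.S ν)) * c = c * star (f.S μ * star (f.S ν)) := by
    intro c hc
    induction hc using NonUnitalStarAlgebra.adjoin_induction with
    | mem t ht =>
      obtain ⟨lam, rfl⟩ := ht
      have h1 := f.comm_q hs lam
      refine ⟨h1, ?_⟩
      have hself : star (f.S lam * star (f.S lam)) = f.S lam * star (f.S lam) := by
        rw [star_mul, star_star]
      have h2 := congrArg star h1
      rw [star_mul (f.S μ * star (f.S ν)) (f.S lam * star (f.S lam)),
        star_mul (f.S lam * star (f.S lam)) (f.S μ * star (f.S ν)), hself] at h2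
      exact h2.symm
    | add x y hx hy ihx ihy =>
      exact ⟨by rw [mul_add, add_mul, ihx.1, ihy.1], by rw [mul_add, add_mul, ihx.2, ihy.2]⟩
    | zero => exact ⟨by rw [mul_zero, zero_mul], by rw [mul_zero, zero_mul]⟩
    | mul x y hx hy ihx ihy =>
      exact ⟨by rw [← mul_assoc, ihx.1, mul_assoc, ihy.1, mul_assoc],
        by rw [← mul_assoc, ihx.2, mul_assoc, ihy.2, mul_assoc]⟩
    | smul r x hx ihx =>
      exact ⟨by rw [mul_smul_comm, smul_mul_assoc, ihx.1],
        by rw [mul_smul_comm, smul_mul_assoc, ihx.2]⟩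
    | star x hx ihx =>
      constructor
      · have h3 := congrArg star ihx.2
        rw [star_mul (star (f.S μ * star (f.S ν))) x, star_mul x (star (f.S μ * star (f.S ν))),
          star_star (f.S μ * star (f.S ν))] at h3
        exact h3.symm
      · have h4 := congrArg star ihx.1
        rw [star_mul (f.S μ * star (f.S ν)) x, star_mul x (f.S μ * star (f.S ν))] at h4
        exact h4.symm
  have hsub : (NonUnitalStarAlgebra.adjoin ℂ
      {a : A | ∃ lam : Λ.Mor, a = f.S lam * star (f.S lam)} : Set A)
      ⊆ {c : A | (f.S μ * star (f.S ν)) * c = c * (f.S μ * star (f.S ν))} :=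
    fun c hc => (main c hc).1
  have hcl : IsClosed {c : A | (f.S μ * star (f.S ν)) * c = c * (f.S μ * star (f.S ν))} :=
    isClosed_eq (continuous_const.mul continuous_id) (continuous_id.mul continuous_const)
  exact closure_minimal hsub hcl hb

end CKFamily
open CKFamily in
/-- In `C*(Λ)` (a C*-algebra generated by a universal Cuntz–Krieger `Λ`-family, i.e. one
carrying a gauge action and with nonzero vertex projections), for `μ, ν ∈ Λ` with
`s(μ) = s(ν)`, the generator `s_μ s_ν*` lies in the relative commutant `D_Λ'` of the
diagonal subalgebra if and only if `μ ∼ ν`. -/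
theorem generator_mem_diag_commutant_iff_sim {k : ℕ} (Λ : KGraph k)
    {A : Type*} [NonUnitalCStarAlgebra A] (f : CKFamily Λ A)
    (γ : (Fin k → Circle) → A ≃⋆ₐ[ℂ] A) (hγ : f.IsGaugeAction γ)
    (hnz : ∀ v, f.S (Λ.idm v) ≠ 0)
    (hgen : gen (Set.range f.S) = Set.univ)
    (μ ν : Λ.Mor) (hsv : Λ.src μ = Λ.src ν) :
    f.S μ * star (f.S ν) ∈ commutant f.diag ↔ Λ.sim μ ν := by
  constructor
  · intro hmem
    exact f.fwd hnz hsv (fun b hb => hmem b hb)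
  · intro hs
    exact fun b hb => f.bwd hs b hb
end

section
/- Let Λ be a row-finite source-free k-graph, m, n ∈ N^k, and let A = Σ_{d(μ)=m, d(ν)=n, s(μ)=s(ν)} a_{μ,ν} s_μ s_ν* be a finite sum in C*(Λ). If A commutes with the diagonal algebra D_Λ, then for each μ ∈ Λ^m there is at most one ν ∈ Λ^n with a_{μ,ν} ≠ 0, and for each ν ∈ Λ^n there is at most one μ ∈ Λ^m with a_{μ,ν} ≠ 0. -/
open scoped BigOperators

section Aux

open scoped Classical

open CKFamily

variable {k : ℕ} {Λ : KGraph k} {A : Type*} [NonUnitalCStarAlgebra A]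

lemma KGraph.comp_inj (Λ : KGraph k) {μ₁ μ₂ ρ : Λ.Mor} (hd : Λ.d μ₁ = Λ.d μ₂)
    (h₁ : Λ.src μ₁ = Λ.rng ρ) (h₂ : Λ.src μ₂ = Λ.rng ρ)
    (hc : Λ.comp μ₁ ρ h₁ = Λ.comp μ₂ ρ h₂) : μ₁ = μ₂ := by
  obtain ⟨pr, -, huniq⟩ := Λ.factor (Λ.comp μ₁ ρ h₁) (Λ.d μ₁) (Λ.d ρ) (Λ.d_comp _ _ _)
  have e1 := huniq (μ₁, ρ) ⟨h₁, rfl, rfl, rfl⟩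
  have e2 := huniq (μ₂, ρ) ⟨h₂, hd.symm, rfl, hc.symm⟩
  exact congrArg Prod.fst (e1.trans e2.symm)

namespace CKFamily

variable (f : CKFamily Λ A)

lemma absorb_right (μ : Λ.Mor) : f.S μ * f.S (Λ.idm (Λ.src μ)) = f.S μ := by
  rw [f.S_mul μ _ (Λ.rng_idm _).symm, Λ.comp_idm_right]

lemma star_comp_mul {μ₁ μ₂ ρ : Λ.Mor} (hd : Λ.d μ₁ = Λ.d μ₂)
    (h₁ : Λ.src μ₁ = Λ.rng ρ) (h₂ : Λ.src μ₂ = Λ.rng ρ) :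
    star (f.S (Λ.comp μ₂ ρ h₂)) * f.S (Λ.comp μ₁ ρ h₁) =
      if μ₁ = μ₂ then f.S (Λ.idm (Λ.src ρ)) else 0 := by
  split_ifs with h
  · subst h
    rw [f.S_ck3, Λ.src_comp]
  · refine f.S_ck3' _ _ (by rw [Λ.d_comp, Λ.d_comp, hd]) (fun hc => h ?_)
    exact (Λ.comp_inj hd.symm h₂ h₁ hc).symm

lemma diag_star_mem {b : A} (hb : b ∈ f.diag) : star b ∈ f.diag := by
  unfold diag gen at hb ⊢
  exact map_mem_closure continuous_star hb (fun x hx => star_mem hx)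

/-- Core lemma : columns of a commuting sum have at most one nonzero entry. -/
lemma core_claim (hnz : ∀ v, f.S (Λ.idm v) ≠ 0)
    (m n : Fin k → ℕ) (P : Finset (Λ.Mor × Λ.Mor))
    (hP : ∀ p ∈ P, Λ.d p.1 = m ∧ Λ.d p.2 = n ∧ Λ.src p.1 = Λ.src p.2)
    (a : Λ.Mor × Λ.Mor → ℂ)
    (hcomm : (∑ p ∈ P, a p • (f.S p.1 * star (f.S p.2))) ∈ commutant f.diag) :
    ∀ μ₁ μ₂ ν, (μ₁, ν) ∈ P → (μ₂, ν) ∈ P →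
        a (μ₁, ν) ≠ 0 → a (μ₂, ν) ≠ 0 → μ₁ = μ₂ := by
  intro μ₁ μ₂ ν h1 h2 ha1 ha2
  by_contra hne
  have hdν : Λ.d ν = n := (hP _ h1).2.1
  obtain ⟨ρ, hρr, hρd⟩ := Λ.sourceFree (Λ.src ν) m
  have hcν : Λ.src ν = Λ.rng ρ := hρr.symm
  set AA := ∑ p ∈ P, a p • (f.S p.1 * star (f.S p.2)) with hAA
  set ξ := Λ.comp ν ρ hcν with hξ
  have hdξ : Λ.d ξ = m + n := by
    rw [hξ, Λ.d_comp, hdν, hρd, add_comm]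
  obtain ⟨⟨α, β⟩, ⟨hcαβ0, hdα0, hdβ0, hαβ0⟩, -⟩ := Λ.factor ξ m n hdξ
  have hcαβ : Λ.src α = Λ.rng β := hcαβ0
  have hdα : Λ.d α = m := hdα0
  have hαβ : Λ.comp α β hcαβ = ξ := hαβ0
  -- key : any coefficient a (μ', ν) with α ≠ μ' vanishes
  have key : ∀ μ', (μ', ν) ∈ P → α ≠ μ' → a (μ', ν) = 0 := by
    intro μ' hν' hαμ
    have hd' : Λ.d μ' = m := (hP _ hν').1
    have hs' : Λ.src μ' = Λ.src ν := (hP _ hν').2.2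
    have hc' : Λ.src μ' = Λ.rng ρ := hs'.trans hcν
    set w := Λ.comp μ' ρ hc' with hw
    have hqd : f.S ξ * star (f.S ξ) ∈ f.diag :=
      subset_closure (NonUnitalStarAlgebra.subset_adjoin ℂ _ ⟨ξ, rfl⟩)
    have hAq : AA * (f.S ξ * star (f.S ξ)) = (f.S ξ * star (f.S ξ)) * AA := hcomm _ hqd
    have hqξ : (f.S ξ * star (f.S ξ)) * f.S ξ = f.S ξ := by
      rw [mul_assoc, f.S_ck3, f.absorb_right]
    have hμ'ξ : star (f.S μ') * f.S ξ = 0 := by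
      rw [← hαβ, ← f.S_mul α β hcαβ, ← mul_assoc,
        f.S_ck3' μ' α (hd'.trans hdα.symm) (fun hh => hαμ hh.symm), zero_mul]
    have hwξ : star (f.S w) * f.S ξ = 0 := by
      rw [hw, ← f.S_mul μ' ρ hc', star_mul, mul_assoc, hμ'ξ, mul_zero]
    have hwq : star (f.S w) * (f.S ξ * star (f.S ξ)) = 0 := by
      rw [← mul_assoc, hwξ, zero_mul]
    have hstep : AA * f.S ξ = (f.S ξ * star (f.S ξ)) * (AA * f.S ξ) := by
      calc AA * f.S ξ = AA * ((f.S ξ * star (f.S ξ)) * f.S ξ) := by rw [hqξ]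
        _ = (AA * (f.S ξ * star (f.S ξ))) * f.S ξ := by rw [← mul_assoc]
        _ = ((f.S ξ * star (f.S ξ)) * AA) * f.S ξ := by rw [hAq]
        _ = (f.S ξ * star (f.S ξ)) * (AA * f.S ξ) := by rw [mul_assoc]
    have h0 : star (f.S w) * (AA * f.S ξ) = 0 := by
      rw [hstep, ← mul_assoc, hwq, zero_mul]
    have hterm : ∀ p ∈ P,
        star (f.S w) * ((a p • (f.S p.1 * star (f.S p.2))) * f.S ξ) =
          if p = (μ', ν) then a p • f.S (Λ.idm (Λ.src ρ)) else 0 := by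
      rintro ⟨p1, p2⟩ hp
      have hpd1 : Λ.d p1 = m := (hP _ hp).1
      have hpd2 : Λ.d p2 = n := (hP _ hp).2.1
      have hps : Λ.src p1 = Λ.src p2 := (hP _ hp).2.2
      show star (f.S w) * ((a (p1, p2) • (f.S p1 * star (f.S p2))) * f.S ξ) = _
      rw [smul_mul_assoc, mul_smul_comm]
      by_cases hp2 : p2 = ν
      · subst hp2
        have hcp : Λ.src p1 = Λ.rng ρ := hps.trans hcν
        have hXξ : (f.S p1 * star (f.S p2)) * f.S ξ = f.S (Λ.comp p1 ρ hcp) := by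
          rw [hξ, ← f.S_mul p2 ρ hcν, ← mul_assoc, mul_assoc (f.S p1),
            f.S_ck3, ← hps, f.absorb_right, f.S_mul p1 ρ hcp]
        rw [hXξ, hw, f.star_comp_mul (hpd1.trans hd'.symm) hcp hc']
        by_cases hp1 : p1 = μ'
        · rw [if_pos hp1, if_pos (by rw [hp1])]
        · rw [if_neg hp1, smul_zero, if_neg (by simp [hp1])]
      · have hz : star (f.S p2) * f.S ν = 0 :=
          f.S_ck3' p2 ν (hpd2.trans hdν.symm) hp2
        have hXz : (f.S p1 * star (f.S p2)) * f.S ξ = 0 := by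
          rw [hξ, ← f.S_mul ν ρ hcν, ← mul_assoc, mul_assoc (f.S p1), hz,
            mul_zero, zero_mul]
        rw [hXz, mul_zero, smul_zero, if_neg (by simp [hp2])]
    have hsum : star (f.S w) * (AA * f.S ξ) = a (μ', ν) • f.S (Λ.idm (Λ.src ρ)) := by
      rw [hAA, Finset.sum_mul, Finset.mul_sum, Finset.sum_congr rfl hterm,
        Finset.sum_ite_eq' P (μ', ν) (fun p => a p • f.S (Λ.idm (Λ.src ρ))), if_pos hν']
    rw [hsum] at h0
    rcases smul_eq_zero.mp h0 with h | h
    · exact h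
    · exact absurd h (hnz _)
  rcases eq_or_ne α μ₁ with h | h
  · exact absurd (key μ₂ h2 (h ▸ hne)) ha2
  · exact absurd (key μ₁ h1 h) ha1

end CKFamily

end Aux

open CKFamily in
/-- If a finite sum `A = Σ a_{μ,ν} s_μ s_ν*` (over pairs with `d(μ) = m`, `d(ν) = n`,
`s(μ) = s(ν)`) commutes with the diagonal subalgebra `D_Λ`, then for each `μ` there is
at most one `ν` with `a_{μ,ν} ≠ 0`, and for each `ν` at most one `μ` with `a_{μ,ν} ≠ 0`. -/
theorem at_most_one_nonzero_coeff {k : ℕ} (Λ : KGraph k)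
    {A : Type*} [NonUnitalCStarAlgebra A] (f : CKFamily Λ A)
    (hnz : ∀ v, f.S (Λ.idm v) ≠ 0)
    (m n : Fin k → ℕ) (P : Finset (Λ.Mor × Λ.Mor))
    (hP : ∀ p ∈ P, Λ.d p.1 = m ∧ Λ.d p.2 = n ∧ Λ.src p.1 = Λ.src p.2)
    (a : Λ.Mor × Λ.Mor → ℂ)
    (hcomm : (∑ p ∈ P, a p • (f.S p.1 * star (f.S p.2))) ∈ commutant f.diag) :
    (∀ μ ν₁ ν₂, (μ, ν₁) ∈ P → (μ, ν₂) ∈ P →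
        a (μ, ν₁) ≠ 0 → a (μ, ν₂) ≠ 0 → ν₁ = ν₂) ∧
    (∀ μ₁ μ₂ ν, (μ₁, ν) ∈ P → (μ₂, ν) ∈ P →
        a (μ₁, ν) ≠ 0 → a (μ₂, ν) ≠ 0 → μ₁ = μ₂) := by
  constructor
  · -- apply the core lemma to the adjoint sum
    set P' : Finset (Λ.Mor × Λ.Mor) := P.map ⟨Prod.swap, Prod.swap_injective⟩ with hP'def
    set a' : Λ.Mor × Λ.Mor → ℂ := fun p => star (a p.swap) with ha'def
    have hP' : ∀ p ∈ P', Λ.d p.1 = n ∧ Λ.d p.2 = m ∧ Λ.src p.1 = Λ.src p.2 := by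
      intro p hp
      rw [hP'def, Finset.mem_map] at hp
      obtain ⟨q, hq, rfl⟩ := hp
      obtain ⟨h1, h2, h3⟩ := hP q hq
      exact ⟨h2, h1, h3.symm⟩
    have hsum : (∑ p ∈ P', a' p • (f.S p.1 * star (f.S p.2))) =
        star (∑ p ∈ P, a p • (f.S p.1 * star (f.S p.2))) := by
      rw [hP'def, Finset.sum_map, star_sum]
      refine Finset.sum_congr rfl (fun p _ => ?_)
      rw [star_smul, star_mul, star_star]
      simp [ha'def]
    have hcomm' : (∑ p ∈ P', a' p • (f.S p.1 * star (f.S p.2))) ∈ commutant f.diag := by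
      rw [hsum]
      intro b hb
      have hb' : star b ∈ f.diag := f.diag_star_mem hb
      calc star (∑ p ∈ P, a p • (f.S p.1 * star (f.S p.2))) * b
          = star (star b * (∑ p ∈ P, a p • (f.S p.1 * star (f.S p.2)))) := by
            rw [star_mul, star_star]
        _ = star ((∑ p ∈ P, a p • (f.S p.1 * star (f.S p.2))) * star b) := by
            rw [hcomm _ hb']
        _ = b * star (∑ p ∈ P, a p • (f.S p.1 * star (f.S p.2))) := by
            rw [star_mul, star_star]
    intro μ ν₁ ν₂ h1 h2 ha1 ha2
    have hm1 : (ν₁, μ) ∈ P' := Finset.mem_map_of_mem _ h1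
    have hm2 : (ν₂, μ) ∈ P' := Finset.mem_map_of_mem _ h2
    refine f.core_claim hnz n m P' hP' a' hcomm' ν₁ ν₂ μ hm1 hm2 ?_ ?_
    · simpa [ha'def] using ha1
    · simpa [ha'def] using ha2
  · exact f.core_claim hnz m n P hP a hcomm
end
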